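/- arXiv:0906.1319 — 2 statements merged into one kernel-verified Lean document; each statement's English description precedes it below -/
import Mathlib

section
/- Let n ≥ 1, P ≥ 1 be integers and set l_n = (3·2^{n-1} - 1)/2 (a half-integer). Then for every real x, |Σ_{l=2^{n-1}}^{2^n - 1} [1/(x - (2l-1)πi) - Σ_{ν=0}^{P-1} (2(l - l_n)πi)^ν/(x - (2l_n - 1)πi)^{ν+1}]| ≤ 1/(2π·3^P). -/
/-!
With `w = x - (3m-2)πi` (the centre's pole, `m = 2^(n-1)`) and `a_l = 2(l - l_n)πi`, the truncation
error of the `l`-th pole is the geometric tail `(a_l/w)^P / (w - a_l)`. Since `|Im w| = (3m-2)π`,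
`|a_l| = |2l - (3m-1)|π ≤ (m-1)π` and `|Im (w - a_l)| ≥ (2m-1)π`, each ratio `r_l = |a_l/w|` is at
most `1/3`, so `r_l^P ≤ 3^(1-P) r_l`; summing, `Σ |2l - (3m-1)| ≤ m²/2 ≤ (3m-2)(2m-1)/6` gives the
factor `1/(2π·3^P)`.
-/

open Finset Complex Real

theorem one_div_sub_sub_sum_geom {K : Type*} [Field K] (P : ℕ) {w a : K} (hw : w ≠ 0)
    (hwa : w - a ≠ 0) :
    1 / (w - a) - ∑ ν ∈ range P, a ^ ν / w ^ (ν + 1) = (a / w) ^ P / (w - a) := by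
  induction P with
  | zero => simp
  | succ P ih =>
    rw [sum_range_succ, ← sub_sub, ih, div_pow, div_pow]
    field_simp
    ring

theorem two_mul_sum_range_abs_two_mul_add_one_sub_le {R : Type*} [CommRing R] [LinearOrder R]
    [IsStrictOrderedRing R] (m : ℕ) :
    2 * ∑ k ∈ range m, |2 * (k : R) + 1 - m| ≤ (m : R) ^ 2 := by
  induction m using Nat.twoStepInduction with
  | zero => simp
  | one => norm_num
  | more m ih _ =>
    rw [sum_range_succ', sum_range_succ]
    have hshift : ∀ k ∈ range m, |2 * ((k + 1 : ℕ) : R) + 1 - ((m + 2 : ℕ) : R)|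
        = |2 * (k : R) + 1 - m| := by
      intro k _; push_cast; ring_nf
    rw [sum_congr rfl hshift]
    push_cast
    have hfirst : |2 * (0 : R) + 1 - (m + 2)| = m + 1 := by
      rw [show 2 * (0 : R) + 1 - (m + 2) = -(m + 1) by ring, abs_neg, abs_of_nonneg (by positivity)]
    have hlast : |2 * ((m : R) + 1) + 1 - (m + 2)| = m + 1 := by
      rw [show 2 * ((m : R) + 1) + 1 - (m + 2) = m + 1 by ring, abs_of_nonneg (by positivity)]
    rw [hfirst, hlast]
    nlinarith

theorem six_mul_sum_Icc_abs_le (m : ℕ) (hm : 1 ≤ m) :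
    6 * ∑ l ∈ Icc m (2 * m - 1), |2 * (l : ℝ) - (3 * m - 1)| ≤ (3 * m - 2) * (2 * m - 1) := by
  have hreindex : ∑ l ∈ Icc m (2 * m - 1), |2 * (l : ℝ) - (3 * m - 1)|
      = ∑ k ∈ range m, |2 * (k : ℝ) + 1 - m| := by
    rw [← Ico_add_one_right_eq_Icc, Nat.sub_add_cancel (by omega), sum_Ico_eq_sum_range,
      show 2 * m - m = m by omega]
    refine sum_congr rfl fun k _ => ?_
    push_cast; ring_nf
  rw [hreindex]
  -- for `m ≥ 2`, `3m² ≤ (3m-2)(2m-1)`; for `m = 1` the only term vanishes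
  rcases hm.eq_or_lt with rfl | hm2
  · norm_num
  · have h2 : (2 : ℝ) ≤ m := by exact_mod_cast hm2
    nlinarith [two_mul_sum_range_abs_two_mul_add_one_sub_le (R := ℝ) m]

theorem pow_le_pow_pred_mul {R : Type*} [CommSemiring R] [PartialOrder R] [IsOrderedRing R]
    {r c : R} {P : ℕ} (hr : 0 ≤ r) (hrc : r ≤ c) (hP : 1 ≤ P) : r ^ P ≤ c ^ (P - 1) * r := by
  rw [← Nat.sub_add_cancel hP, pow_succ, Nat.add_sub_cancel]
  gcongr

theorem sum_Icc_ratio_pow_div_le (m P : ℕ) (hm : 1 ≤ m) (hP : 1 ≤ P) :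
    ∑ l ∈ Icc m (2 * m - 1), (|2 * (l : ℝ) - (3 * m - 1)| / (3 * m - 2)) ^ P / ((2 * m - 1) * π)
      ≤ 1 / (2 * π * 3 ^ P) := by
  have hm' : (1 : ℝ) ≤ m := by exact_mod_cast hm
  have hA : (0 : ℝ) < 3 * m - 2 := by linarith
  have hB : (0 : ℝ) < 2 * m - 1 := by linarith
  have hratio : ∀ l ∈ Icc m (2 * m - 1), |2 * (l : ℝ) - (3 * m - 1)| / (3 * m - 2) ≤ 1 / 3 := by
    intro l hl
    have hl := mem_Icc.mp hl
    have hl1 : (m : ℝ) ≤ l := by exact_mod_cast hl.1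
    have hl2 : (l : ℝ) + 1 ≤ 2 * m := by exact_mod_cast (by omega : l + 1 ≤ 2 * m)
    rw [div_le_iff₀ hA, abs_le]
    constructor <;> linarith
  calc ∑ l ∈ Icc m (2 * m - 1), (|2 * (l : ℝ) - (3 * m - 1)| / (3 * m - 2)) ^ P / ((2 * m - 1) * π)
      ≤ ∑ l ∈ Icc m (2 * m - 1), (1 / 3) ^ (P - 1) * (|2 * (l : ℝ) - (3 * m - 1)| / (3 * m - 2))
          / ((2 * m - 1) * π) := by
        gcongr with l hl
        exact pow_le_pow_pred_mul (by positivity) (hratio l hl) hP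
    _ = (1 / 3) ^ (P - 1) / (6 * π) * ((6 * ∑ l ∈ Icc m (2 * m - 1), |2 * (l : ℝ) - (3 * m - 1)|)
          / ((3 * m - 2) * (2 * m - 1))) := by
        rw [mul_sum, sum_div, mul_sum]
        refine sum_congr rfl fun l _ => ?_
        field_simp
    _ ≤ (1 / 3) ^ (P - 1) / (6 * π) * 1 := by
        gcongr
        exact (div_le_one (by positivity)).mpr (six_mul_sum_Icc_abs_le m hm)
    _ = 1 / (2 * π * 3 ^ P) := by
        rw [← Nat.sub_add_cancel hP, pow_succ, Nat.add_sub_cancel, div_pow, one_pow]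
        field_simp
        ring

theorem abs_le_norm_ofReal_sub_ofReal_mul_I (x y : ℝ) : |y| ≤ ‖(x : ℂ) - y * I‖ := by
  simpa using abs_im_le_norm ((x : ℂ) - y * I)

theorem norm_sum_multipole_group_le (m P : ℕ) (hm : 1 ≤ m) (hP : 1 ≤ P) (x : ℝ) :
    ‖∑ l ∈ Icc m (2 * m - 1),
        (1 / ((x : ℂ) - (2 * (l : ℂ) - 1) * π * I)
          - ∑ ν ∈ range P, (2 * ((l : ℂ) - (3 * m - 1) / 2) * π * I) ^ ν
              / ((x : ℂ) - (2 * ((3 * m - 1 : ℂ) / 2) - 1) * π * I) ^ (ν + 1))‖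
      ≤ 1 / (2 * π * 3 ^ P) := by
  have hm' : (1 : ℝ) ≤ m := by exact_mod_cast hm
  set w : ℂ := (x : ℂ) - (2 * ((3 * m - 1 : ℂ) / 2) - 1) * π * I with hw_def
  have hw : (3 * m - 2) * π ≤ ‖w‖ := by
    have hw_eq : w = (x : ℂ) - (((3 * m - 2) * π : ℝ) : ℂ) * I := by rw [hw_def]; push_cast; ring
    rw [hw_eq]
    exact (le_abs_self _).trans (abs_le_norm_ofReal_sub_ofReal_mul_I _ _)
  have hterm : ∀ l ∈ Icc m (2 * m - 1),
      ‖1 / ((x : ℂ) - (2 * (l : ℂ) - 1) * π * I)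
          - ∑ ν ∈ range P, (2 * ((l : ℂ) - (3 * m - 1) / 2) * π * I) ^ ν / w ^ (ν + 1)‖
        ≤ (|2 * (l : ℝ) - (3 * m - 1)| / (3 * m - 2)) ^ P / ((2 * m - 1) * π) := by
    intro l hl
    have hl : (m : ℝ) ≤ l := by exact_mod_cast (mem_Icc.mp hl).1
    set a : ℂ := 2 * ((l : ℂ) - (3 * m - 1) / 2) * π * I with ha_def
    have ha : ‖a‖ = |2 * (l : ℝ) - (3 * m - 1)| * π := by
      have ha_eq : a = (((2 * l - (3 * m - 1)) * π : ℝ) : ℂ) * I := by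
        rw [ha_def]; push_cast; ring
      rw [ha_eq, norm_mul, norm_I, mul_one, norm_real, Real.norm_eq_abs, abs_mul,
        abs_of_pos pi_pos]
    have hpole : (x : ℂ) - (2 * (l : ℂ) - 1) * π * I = w - a := by rw [hw_def, ha_def]; ring
    have hwa : (2 * m - 1) * π ≤ ‖w - a‖ := by
      have hwa_eq : w - a = (x : ℂ) - (((2 * l - 1) * π : ℝ) : ℂ) * I := by
        rw [← hpole]; push_cast; ring
      rw [hwa_eq]
      refine le_trans ?_ (abs_le_norm_ofReal_sub_ofReal_mul_I _ _)
      rw [abs_of_pos (by nlinarith [pi_pos])]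
      gcongr
    have hB : 0 < (2 * m - 1) * π := by nlinarith [pi_pos]
    have hA : (0 : ℝ) < 3 * m - 2 := by linarith
    have hratio : ‖a‖ / ‖w‖ ≤ |2 * (l : ℝ) - (3 * m - 1)| / (3 * m - 2) := by
      rw [ha, ← mul_div_mul_right _ (3 * m - 2 : ℝ) pi_pos.ne']
      gcongr
    rw [hpole, one_div_sub_sub_sum_geom P (norm_pos_iff.mp ((mul_pos hA pi_pos).trans_le hw))
      (norm_pos_iff.mp (hB.trans_le hwa)), norm_div, norm_pow, norm_div]
    gcongr
  calc _ ≤ _ := norm_sum_le _ _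
    _ ≤ _ := sum_le_sum hterm
    _ ≤ _ := sum_Icc_ratio_pow_div_le m P hm hP

open Complex in
theorem multipole_group_truncation_error (n P : ℕ) (hn : 1 ≤ n) (hP : 1 ≤ P) (x : ℝ) :
    ‖∑ l ∈ Finset.Icc ((2:ℕ) ^ (n - 1)) (2 ^ n - 1),
        (1 / ((x : ℂ) - (2 * (l : ℂ) - 1) * Real.pi * Complex.I)
          - ∑ ν ∈ Finset.range P,
              (2 * ((l : ℂ) - (3 * 2 ^ (n - 1) - 1) / 2) * Real.pi * Complex.I) ^ ν
                / ((x : ℂ) - (2 * ((3 * 2 ^ (n - 1) - 1 : ℂ) / 2) - 1) * Real.pi * Complex.I)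
                  ^ (ν + 1))‖
      ≤ 1 / (2 * Real.pi * 3 ^ P) := by
  have hgroup : 2 ^ n - 1 = 2 * 2 ^ (n - 1) - 1 := by
    rw [← pow_succ', Nat.sub_add_cancel hn]
  have hcast : (2 : ℂ) ^ (n - 1) = ((2 ^ (n - 1) : ℕ) : ℂ) := by norm_cast
  rw [hgroup, hcast]
  exact norm_sum_multipole_group_le (2 ^ (n - 1)) P Nat.one_le_two_pow hP x
end

section
/- For every real x and every natural number M, Re(Σ_{l=M+1}^∞ 1/(2x - (2l-1)iπ)) = (1/(2π))·Im(ψ(M + 1/2 + ix/π)), where ψ is the digamma function. -/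
/-!
On the reals, `D = (log ∘ Γ)'` satisfies `D (y + 1) = D y + 1 / y` and `D (n + 1) = -γ + Hₙ`,
and it is monotone because `log ∘ Γ` is convex (Bohr–Mollerup). The partial sums of
`∑ₖ (1 / (k + 1) - 1 / (k + t))` are therefore `D t + γ + D (n + 1) - D (t + n)`, and monotonicity
squeezes `D (t + n) - D (n + 1)` to `0`; this gives `ψ(t) = -γ + ∑ₖ (1 / (k + 1) - 1 / (k + t))`
for `t > 0`. Both sides are holomorphic on `Re z > 0` (the series converges locally uniformly),
so the identity theorem extends the formula there. Finally,
`2x - (2l + 2M + 1)iπ = -2πi (l + z)` with `z = M + 1/2 + ix/π`, so the real part of the `l`-th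
Matsubara term is `(1/2π)` times the imaginary part of the `l`-th term of the series for `ψ(z)`.
-/

/-- The digamma function ψ(z) = Γ'(z)/Γ(z). -/
noncomputable def digamma (z : ℂ) : ℂ := deriv Complex.Gamma z / Complex.Gamma z

open Filter Topology Finset

namespace Real

lemma differentiableAt_Gamma_of_pos {y : ℝ} (hy : 0 < y) : DifferentiableAt ℝ Gamma y :=
  differentiableAt_Gamma fun m ↦ by linarith [m.cast_nonneg (α := ℝ)]

lemma differentiableAt_log_Gamma {y : ℝ} (hy : 0 < y) : DifferentiableAt ℝ (log ∘ Gamma) y :=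
  (differentiableAt_Gamma_of_pos hy).log (Gamma_pos_of_pos hy).ne'

lemma deriv_log_Gamma {y : ℝ} (hy : 0 < y) : deriv (log ∘ Gamma) y = deriv Gamma y / Gamma y := by
  rw [Function.comp_def, deriv.log (differentiableAt_Gamma_of_pos hy) (Gamma_pos_of_pos hy).ne']

lemma deriv_log_Gamma_nat_add_one (n : ℕ) :
    deriv (log ∘ Gamma) (n + 1) = -eulerMascheroniConstant + harmonic n := by
  rw [deriv_log_Gamma (by positivity), deriv_Gamma_nat, Gamma_nat_eq_factorial,
    mul_div_cancel_left₀ _ (by positivity)]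

lemma deriv_log_Gamma_add_one {y : ℝ} (hy : 0 < y) :
    deriv (log ∘ Gamma) (y + 1) = deriv (log ∘ Gamma) y + y⁻¹ := by
  rw [← deriv_comp_add_const, ← deriv_log,
    ← deriv_add (differentiableAt_log_Gamma hy) (differentiableAt_log hy.ne')]
  refine EventuallyEq.deriv_eq ?_
  filter_upwards [eventually_gt_nhds hy] with t ht
  simp only [Function.comp_apply, Pi.add_apply, Gamma_add_one ht.ne',
    log_mul ht.ne' (Gamma_pos_of_pos ht).ne', add_comm]

lemma deriv_log_Gamma_add_nat {y : ℝ} (hy : 0 < y) (n : ℕ) :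
    deriv (log ∘ Gamma) (y + n) = deriv (log ∘ Gamma) y + ∑ k ∈ range n, (y + k)⁻¹ := by
  induction n with
  | zero => simp
  | succ n ih =>
    rw [Nat.cast_succ, ← add_assoc, deriv_log_Gamma_add_one (by positivity), ih, sum_range_succ,
      add_assoc]

lemma monotoneOn_deriv_log_Gamma : MonotoneOn (deriv (log ∘ Gamma)) (Set.Ioi 0) :=
  convexOn_log_Gamma.monotoneOn_deriv fun _ hy ↦ differentiableAt_log_Gamma hy

lemma tendsto_deriv_log_Gamma_add_nat_sub {t : ℝ} (ht : 0 < t) :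
    Tendsto (fun n : ℕ ↦ deriv (log ∘ Gamma) (t + n) - deriv (log ∘ Gamma) (n + 1)) atTop
      (𝓝 0) := by
  set c := ⌈t⌉₊
  have lower : ∀ᶠ n : ℕ in atTop,
      -(n : ℝ)⁻¹ ≤ deriv (log ∘ Gamma) (t + n) - deriv (log ∘ Gamma) (n + 1) := by
    filter_upwards [eventually_gt_atTop 0] with n hn
    have hn' : (0 : ℝ) < n := by exact_mod_cast hn
    have := monotoneOn_deriv_log_Gamma hn' (by simp only [Set.mem_Ioi]; positivity) (by linarith : (n : ℝ) ≤ t + n)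
    rw [deriv_log_Gamma_add_one hn']
    linarith
  have upper (n : ℕ) : deriv (log ∘ Gamma) (t + n) - deriv (log ∘ Gamma) (n + 1) ≤
      ∑ k ∈ range c, ((n : ℝ) + 1 + k)⁻¹ := by
    have := monotoneOn_deriv_log_Gamma (by simp only [Set.mem_Ioi]; positivity) (by simp only [Set.mem_Ioi]; positivity)
      (by linarith [Nat.le_ceil t] : t + n ≤ (n + 1) + (c : ℝ))
    rw [deriv_log_Gamma_add_nat (y := n + 1) (by positivity)] at this
    linarith
  have hlower : Tendsto (fun n : ℕ ↦ -(n : ℝ)⁻¹) atTop (𝓝 0) := by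
    simpa using (tendsto_inv_atTop_nhds_zero_nat (𝕜 := ℝ)).neg
  have hupper : Tendsto (fun n : ℕ ↦ ∑ k ∈ range c, ((n : ℝ) + 1 + k)⁻¹) atTop (𝓝 0) := by
    rw [← sum_const_zero (s := range c)]
    refine tendsto_finsetSum _ fun k _ ↦ ?_
    exact tendsto_inv_atTop_zero.comp (tendsto_atTop_add_const_right _ _
      (tendsto_atTop_add_const_right _ _ tendsto_natCast_atTop_atTop))
  exact tendsto_of_tendsto_of_tendsto_of_le_of_le' hlower hupper lower (.of_forall upper)

lemma tendsto_sum_range_one_div_sub_one_div {t : ℝ} (ht : 0 < t) :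
    Tendsto (fun n : ℕ ↦ ∑ k ∈ range n, (1 / (k + 1 : ℝ) - 1 / (k + t))) atTop
      (𝓝 (deriv (log ∘ Gamma) t + eulerMascheroniConstant)) := by
  have hsum (n : ℕ) : ∑ k ∈ range n, (1 / (k + 1 : ℝ) - 1 / (k + t)) =
      deriv (log ∘ Gamma) t + eulerMascheroniConstant -
        (deriv (log ∘ Gamma) (t + n) - deriv (log ∘ Gamma) (n + 1)) := by
    rw [deriv_log_Gamma_add_nat ht, deriv_log_Gamma_nat_add_one, harmonic, sum_sub_distrib]
    push_cast
    simp only [one_div, add_comm t]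
    ring
  rw [tendsto_congr hsum]
  simpa using (tendsto_deriv_log_Gamma_add_nat_sub ht).const_sub
    (deriv (log ∘ Gamma) t + eulerMascheroniConstant)

end Real

lemma Complex.differentiableAt_Gamma_of_re_pos {s : ℂ} (hs : 0 < s.re) :
    DifferentiableAt ℂ Gamma s :=
  differentiableAt_Gamma s fun m h ↦ by
    have := congrArg re h
    simp only [neg_re, natCast_re] at this
    linarith [m.cast_nonneg (α := ℝ)]

lemma norm_one_div_sub_one_div_le {z : ℂ} {δ R : ℝ} (hδ : 0 < δ) (hδ1 : δ ≤ 1) (hz : δ ≤ z.re)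
    (hR : ‖z‖ ≤ R) (k : ℕ) :
    ‖1 / (k + 1 : ℂ) - 1 / (k + z)‖ ≤ (R + 1) / δ * (1 / ((k : ℝ) + 1) ^ 2) := by
  have hk : ‖(k + 1 : ℂ)‖ = k + 1 := by norm_cast
  have hkz : δ * (k + 1) ≤ ‖(k + z : ℂ)‖ :=
    calc δ * (k + 1) ≤ k + z.re := by nlinarith [k.cast_nonneg (α := ℝ)]
      _ = (k + z : ℂ).re := by simp
      _ ≤ ‖(k + z : ℂ)‖ := Complex.re_le_norm _
  have hne : (k + z : ℂ) ≠ 0 := norm_pos_iff.mp (by nlinarith)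
  have hnum : ‖1 * (k + z) - (k + 1) * 1‖ ≤ R + 1 :=
    calc ‖1 * (k + z) - (k + 1) * 1‖ = ‖z - 1‖ := by ring_nf
      _ ≤ ‖z‖ + ‖(1 : ℂ)‖ := norm_sub_le _ _
      _ ≤ R + 1 := by simpa using hR
  rw [div_sub_div _ _ (by exact_mod_cast k.succ_ne_zero) hne, norm_div, norm_mul, hk]
  calc ‖1 * (k + z) - (k + 1) * 1‖ / ((k + 1) * ‖(k + z : ℂ)‖)
      ≤ (R + 1) / ((k + 1) * (δ * (k + 1))) := by
        gcongr
        exact (norm_nonneg _).trans hnum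
    _ = (R + 1) / δ * (1 / ((k : ℝ) + 1) ^ 2) := by field_simp

lemma summable_one_div_nat_add_one_sq : Summable (fun k : ℕ ↦ 1 / ((k : ℝ) + 1) ^ 2) := by
  simpa using (summable_nat_add_iff 1).mpr (Real.summable_one_div_nat_pow.mpr one_lt_two)

lemma summable_one_div_sub_one_div {z : ℂ} (hz : 0 < z.re) :
    Summable (fun k : ℕ ↦ 1 / (k + 1 : ℂ) - 1 / (k + z)) :=
  .of_norm_bounded (summable_one_div_nat_add_one_sq.mul_left _)
    (norm_one_div_sub_one_div_le (lt_min hz one_pos) (min_le_right _ _) (min_le_left _ _) le_rfl)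

lemma isOpen_setOf_re_pos : IsOpen {z : ℂ | 0 < z.re} :=
  isOpen_lt continuous_const Complex.continuous_re

lemma differentiableOn_tsum_one_div_sub_one_div :
    DifferentiableOn ℂ (fun z ↦ ∑' k : ℕ, (1 / (k + 1 : ℂ) - 1 / (k + z))) {z | 0 < z.re} := by
  intro z₀ hz₀
  set δ := min (z₀.re / 2) 1
  set U : Set ℂ := {z | δ < z.re} ∩ {z | ‖z‖ < ‖z₀‖ + 1}
  have hU : IsOpen U := (isOpen_lt continuous_const Complex.continuous_re).inter
    (isOpen_lt continuous_norm continuous_const)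
  have hz₀U : z₀ ∈ U :=
    ⟨show δ < z₀.re from (min_le_left _ _).trans_lt (half_lt_self hz₀), lt_add_one ‖z₀‖⟩
  have hδ : 0 < δ := lt_min (half_pos hz₀) one_pos
  have hdiff : DifferentiableOn ℂ (fun z ↦ ∑' k : ℕ, (1 / (k + 1 : ℂ) - 1 / (k + z))) U := by
    refine Complex.differentiableOn_tsum_of_summable_norm
      (summable_one_div_nat_add_one_sq.mul_left ((‖z₀‖ + 1 + 1) / δ)) (fun k ↦ ?_) hU
      fun k z hz ↦ norm_one_div_sub_one_div_le hδ (min_le_right _ _) hz.1.le hz.2.le k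
    refine (differentiableOn_const _).sub ((differentiableOn_const _).div
      ((differentiableOn_const _).add differentiableOn_id) fun z hz ↦ Complex.ne_zero_of_re_pos ?_)
    have hzδ : δ < z.re := hz.1
    simp only [Complex.add_re, Complex.natCast_re]
    linarith [k.cast_nonneg (α := ℝ)]
  exact (hdiff.differentiableAt (hU.mem_nhds hz₀U)).differentiableWithinAt

lemma digamma_ofReal {t : ℝ} (ht : 0 < t) :
    digamma t = ((deriv (Real.log ∘ Real.Gamma) t : ℝ) : ℂ) := by
  have hC : HasDerivAt (fun y : ℝ ↦ Complex.Gamma y) (deriv Complex.Gamma t) t :=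
    (Complex.differentiableAt_Gamma_of_re_pos (by simpa using ht)).hasDerivAt.comp_ofReal
  have hR : HasDerivAt (fun y : ℝ ↦ (Real.Gamma y : ℂ)) ((deriv Real.Gamma t : ℝ) : ℂ) t :=
    (Real.differentiableAt_Gamma_of_pos ht).hasDerivAt.ofReal_comp
  simp only [Complex.Gamma_ofReal] at hC
  rw [digamma, hC.unique hR, Complex.Gamma_ofReal, Real.deriv_log_Gamma ht, Complex.ofReal_div]

lemma hasSum_one_div_sub_one_div_ofReal {t : ℝ} (ht : 0 < t) :
    HasSum (fun k : ℕ ↦ 1 / (k + 1 : ℂ) - 1 / (k + t))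
      (digamma t + Real.eulerMascheroniConstant) := by
  rw [(summable_one_div_sub_one_div (by simpa using ht)).hasSum_iff_tendsto_nat, digamma_ofReal ht,
    ← Complex.ofReal_add]
  convert (Complex.continuous_ofReal.tendsto _).comp
    (Real.tendsto_sum_range_one_div_sub_one_div ht) using 1
  ext n
  simp

lemma analyticOnNhd_digamma : AnalyticOnNhd ℂ digamma {z | 0 < z.re} := by
  have hGamma : AnalyticOnNhd ℂ Complex.Gamma {z | 0 < z.re} :=
    DifferentiableOn.analyticOnNhd (fun _ hz ↦
      (Complex.differentiableAt_Gamma_of_re_pos hz).differentiableWithinAt) isOpen_setOf_re_pos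
  exact hGamma.deriv.div hGamma fun z hz ↦ Complex.Gamma_ne_zero_of_re_pos hz

lemma hasSum_one_div_sub_one_div {z : ℂ} (hz : 0 < z.re) :
    HasSum (fun k : ℕ ↦ 1 / (k + 1 : ℂ) - 1 / (k + z))
      (digamma z + Real.eulerMascheroniConstant) := by
  suffices digamma z + Real.eulerMascheroniConstant =
      ∑' k : ℕ, (1 / (k + 1 : ℂ) - 1 / (k + z)) from
    this ▸ (summable_one_div_sub_one_div hz).hasSum
  have hreal : Tendsto ((↑) : ℝ → ℂ) (𝓝[>] 1) (𝓝[≠] 1) :=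
    tendsto_nhdsWithin_of_tendsto_nhds_of_eventually_within _
      ((Complex.continuous_ofReal.tendsto' 1 1 (by simp)).mono_left nhdsWithin_le_nhds)
      (eventually_nhdsWithin_of_forall fun t ht ↦ by simpa using ht.ne')
  refine (analyticOnNhd_digamma.add analyticOnNhd_const).eqOn_of_preconnected_of_frequently_eq
    (differentiableOn_tsum_one_div_sub_one_div.analyticOnNhd isOpen_setOf_re_pos)
    (convex_halfSpace_re_gt 0).isPreconnected (by simp : (1 : ℂ) ∈ {z : ℂ | 0 < z.re})
    (hreal.frequently (Eventually.frequently ?_)) hz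
  filter_upwards [self_mem_nhdsWithin] with t ht
  exact (hasSum_one_div_sub_one_div_ofReal (zero_lt_one.trans ht)).tsum_eq.symm

lemma re_one_div_matsubara (x : ℝ) (M l : ℕ) :
    (1 / (2 * (x : ℂ) - (2 * ((l : ℂ) + M + 1) - 1) * Complex.I * Real.pi)).re =
      1 / (2 * Real.pi) *
        (1 / (l + 1 : ℂ) - 1 / (l + ((M : ℂ) + 1 / 2 + Complex.I * x / Real.pi))).im := by
  have hden : 2 * (x : ℂ) - (2 * ((l : ℂ) + M + 1) - 1) * Complex.I * Real.pi =
      -2 * Real.pi * Complex.I * (l + ((M : ℂ) + 1 / 2 + Complex.I * x / Real.pi)) := by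
    field_simp
    ring_nf
    rw [Complex.I_sq]
    ring
  have hinv (w : ℂ) : 1 / (-2 * Real.pi * Complex.I * w) =
      ((1 / (2 * Real.pi) : ℝ) : ℂ) * (Complex.I * (1 / w)) := by
    rw [one_div, mul_inv, mul_inv, mul_inv, Complex.inv_I]
    push_cast
    ring
  rw [hden, hinv, Complex.re_ofReal_mul, Complex.I_mul_re, Complex.sub_im]
  norm_cast
  simp

theorem matsubara_tail_digamma (x : ℝ) (M : ℕ) :
    ∑' l : ℕ, (1 / (2 * (x : ℂ) - (2 * ((l : ℂ) + M + 1) - 1) * Complex.I * Real.pi)).re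
      = (1 / (2 * Real.pi)) *
        (digamma ((M : ℂ) + 1 / 2 + Complex.I * x / Real.pi)).im := by
  have hre : ((M : ℂ) + 1 / 2 + Complex.I * x / Real.pi).re = M + 1 / 2 := by simp
  have hz : 0 < ((M : ℂ) + 1 / 2 + Complex.I * x / Real.pi).re := hre ▸ by positivity
  have him := Complex.hasSum_im (hasSum_one_div_sub_one_div hz)
  simp_rw [re_one_div_matsubara, tsum_mul_left, him.tsum_eq]
  simp
end
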